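/- Let n be odd and let G_h(s,x) = (s² − 2Re(x)s + |x|²)^{-(h+1)}(s − x̄) for paravectors s, x with x ∉ [s]. In the quaternionic case (n = 3, h = 1), the function x ↦ G₁(s,x) = (s² − 2Re(x)s + |x|²)^{-2}(s − x̄) is right Fueter-regular in x, i.e. ∂G₁/∂x₀ + (∂G₁/∂x₁)i + (∂G₁/∂x₂)j + (∂G₁/∂x₃)k = 0 wherever s² − 2Re(x)s + |x|² is invertible. -/

import Mathlib

/-!
Write `Q(x) = s² - 2Re(x)s + |x|²`. Along a line `x + t d`, the derivative of `Q` is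
`2⟨x, d⟩ - 2 Re(d) s`, a real combination of `1` and `s`, so it commutes with `Q`; hence the
derivative of `G₁ = Q⁻² (s - x̄)` in direction `d` is `-2 Q⁻³ ∂_d Q (s - x̄) - Q⁻² d̄`. Summing
against the right units, the second terms give `-4 Q⁻²`, while
`∑ₗ (∂_{eₗ} Q) (s - x̄) eₗ = 2((s - x̄)x - s(s - x̄))`, which is `-2Q` by `s(s - x̄) - (s - x̄)x = Q`.
The two contributions `4 Q⁻³ Q` and `-4 Q⁻²` cancel.
-/

open Quaternion

/-- The directional derivative of `f : ℍ → ℍ` at `q` in the direction `d`. -/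
noncomputable def dirD (f : Quaternion ℝ → Quaternion ℝ) (d q : Quaternion ℝ) : Quaternion ℝ :=
  deriv (fun t : ℝ => f (q + t • d)) 0

/-- The quaternion units `i`, `j`, `k`. -/
def qI : Quaternion ℝ := ⟨0, 1, 0, 0⟩
def qJ : Quaternion ℝ := ⟨0, 0, 1, 0⟩
def qK : Quaternion ℝ := ⟨0, 0, 0, 1⟩

/-- The kernel `G₁(s,x) = (s² - 2Re(x)s + |x|²)⁻² (s - x̄)`. -/
noncomputable def G1 (s y : Quaternion ℝ) : Quaternion ℝ :=
  ((s * s - ((2 * y.re : ℝ) : Quaternion ℝ) * s +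
    ((Quaternion.normSq y : ℝ) : Quaternion ℝ))⁻¹) ^ 2 * (s - star y)

theorem HasDerivAt.inv_sq_of_commute {𝕜 R : Type*} [NontriviallyNormedField 𝕜]
    [NormedDivisionRing R] [NormedAlgebra 𝕜 R] {f : 𝕜 → R} {f' : R} {t : 𝕜}
    (hf : HasDerivAt f f' t) (hft : f t ≠ 0) (hcomm : Commute (f t) f') :
    HasDerivAt (fun u => (f u)⁻¹ ^ 2) (-2 * (f t)⁻¹ ^ 3 * f') t := by
  have hinv : HasDerivAt (fun u => (f u)⁻¹) (-((f t)⁻¹ * f' * (f t)⁻¹)) t := by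
    simpa [Function.comp_def] using (hasFDerivAt_inv' (𝕜 := 𝕜) hft).comp_hasDerivAt t hf
  have hc : Commute (f t)⁻¹ f' := hcomm.inv_left₀
  simp only [pow_two]
  refine (hinv.mul hinv).congr_deriv ?_
  set a := (f t)⁻¹
  calc -(a * f' * a) * a + a * -(a * f' * a) = -(a * f' * (a * a)) - a * a * f' * a := by
        noncomm_ring
    _ = -(f' * a * (a * a)) - f' * (a * a) * a := by rw [hc.eq, (hc.mul_left hc).eq]
    _ = -2 * a ^ 3 * f' := by rw [mul_assoc (-2 : R), (hc.pow_left 3).eq]; noncomm_ring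

theorem HasDerivAt.algebraMap {𝕜 A : Type*} [NontriviallyNormedField 𝕜] [NormedRing A]
    [NormedAlgebra 𝕜 A] {g : 𝕜 → 𝕜} {g' t : 𝕜} (hg : HasDerivAt g g' t) :
    HasDerivAt (fun u => algebraMap 𝕜 A (g u)) (algebraMap 𝕜 A g') t := by
  simpa only [Algebra.algebraMap_eq_smul_one] using hg.smul_const (1 : A)

namespace Quaternion

/-- `Q_{c,s}(x)` of the S-functional calculus: the characteristic polynomial of `x`, evaluated
at `s`. -/
noncomputable def qcs (s x : ℍ) : ℍ :=
  s * s - ((2 * x.re : ℝ) : ℍ) * s + ((normSq x : ℝ) : ℍ)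

noncomputable def qcsDeriv (s x d : ℍ) : ℍ :=
  ((2 * inner ℝ x d : ℝ) : ℍ) - ((2 * d.re : ℝ) : ℍ) * s

theorem hasDerivAt_qcs_add_smul (s x d : ℍ) :
    HasDerivAt (fun t : ℝ => qcs s (x + t • d)) (qcsDeriv s x d) 0 := by
  have hline : HasDerivAt (fun t : ℝ => x + t • d) d 0 := by
    simpa using ((hasDerivAt_id (0 : ℝ)).smul_const d).const_add x
  have hre : HasDerivAt (fun t : ℝ => 2 * (x + t • d).re) (2 * d.re) 0 := by
    simpa using (((hasDerivAt_id (0 : ℝ)).mul_const d.re).const_add x.re).const_mul 2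
  have hnormSq : HasDerivAt (fun t : ℝ => normSq (x + t • d)) (2 * inner ℝ x d) 0 := by
    simpa [normSq_eq_norm_mul_self, ← sq] using hline.norm_sq
  have := ((hasDerivAt_const (0 : ℝ) (s * s)).sub
    ((hre.algebraMap (A := ℍ)).mul_const s)).add (hnormSq.algebraMap (A := ℍ))
  simp only [algebraMap_def] at this
  exact this.congr_deriv (by rw [qcsDeriv]; abel)

theorem commute_qcs_qcsDeriv (s x d : ℍ) : Commute (qcs s x) (qcsDeriv s x d) := by
  have hs : Commute s (qcs s x) :=
    (((Commute.refl s).mul_right (Commute.refl s)).sub_right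
      ((coe_commute _ s).symm.mul_right (Commute.refl s))).add_right (coe_commute _ s).symm
  exact (coe_commute _ _).symm.sub_right ((coe_commute _ _).symm.mul_right hs.symm)

theorem dirD_G1 (s x d : ℍ) (h : qcs s x ≠ 0) :
    dirD (G1 s) d x = -2 * (qcs s x)⁻¹ ^ 3 * (qcsDeriv s x d * (s - star x)) -
      (qcs s x)⁻¹ ^ 2 * star d := by
  have hconj : HasDerivAt (fun t : ℝ => s - star (x + t • d)) (-star d) 0 := by
    simpa using (((hasDerivAt_id (0 : ℝ)).smul_const (star d)).const_add (star x)).const_sub s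
  have hx : x + (0 : ℝ) • d = x := by simp
  have hpow := (hasDerivAt_qcs_add_smul s x d).inv_sq_of_commute (by rwa [hx])
    (by rw [hx]; exact commute_qcs_qcsDeriv s x d)
  have hG1 := (hpow.mul hconj).deriv
  rw [hx] at hG1
  exact hG1.trans (by noncomm_ring)

/-- Applied to `d ↦ ∂_d f(x)`, this is the right Cauchy–Fueter operator. -/
noncomputable def rightFueterSum (F : ℍ → ℍ) : ℍ :=
  F 1 + F qI * qI + F qJ * qJ + F qK * qK

theorem rightFueterSum_mul_sub_mul (a b : ℍ) (F G : ℍ → ℍ) :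
    rightFueterSum (fun d => a * F d - b * G d) =
      a * rightFueterSum F - b * rightFueterSum G := by
  simp only [rightFueterSum]
  noncomm_ring

theorem rightFueterSum_star : rightFueterSum star = 4 := by
  rw [rightFueterSum, show (4 : ℍ) = ((4 : ℝ) : ℍ) by norm_cast]
  apply Quaternion.ext <;> simp [re_mul, imI_mul, imJ_mul, imK_mul] <;> simp [qI, qJ, qK]
  norm_num

theorem mul_sub_star_sub_sub_star_mul (s x : ℍ) :
    s * (s - star x) - (s - star x) * x = qcs s x := by
  calc s * (s - star x) - (s - star x) * x = s * s - s * (x + star x) + star x * x := by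
        noncomm_ring
    _ = qcs s x := by rw [self_add_star', star_mul_self, (coe_commute _ s).symm.eq, qcs]

theorem rightFueterSum_qcsDeriv_mul (s x : ℍ) :
    rightFueterSum (fun d => qcsDeriv s x d * (s - star x)) = -2 * qcs s x := by
  have hsum : rightFueterSum (fun d => qcsDeriv s x d * (s - star x)) =
      2 * ((s - star x) * x - s * (s - star x)) := by
    -- the real coefficients `⟨x, eₗ⟩` reassemble `x`, and only `e₀ = 1` has a real part
    rw [rightFueterSum, two_mul]
    apply Quaternion.ext <;> simp [qcsDeriv, inner_def, re_mul, imI_mul, imJ_mul, imK_mul] <;>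
      simp [qI, qJ, qK] <;> ring
  rw [hsum, ← neg_sub (s * (s - star x)), mul_sub_star_sub_sub_star_mul]
  noncomm_ring

end Quaternion

/-- The function `x ↦ G₁(s,x) = (s² - 2Re(x)s + |x|²)⁻²(s - x̄)` is right Fueter-regular:
`∂G₁/∂x₀ + (∂G₁/∂x₁)i + (∂G₁/∂x₂)j + (∂G₁/∂x₃)k = 0` wherever
`s² - 2Re(x)s + |x|²` is invertible (nonzero). -/
theorem G1_right_Fueter_regular (s x : Quaternion ℝ)
    (h : s * s - ((2 * x.re : ℝ) : Quaternion ℝ) * s +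
      ((Quaternion.normSq x : ℝ) : Quaternion ℝ) ≠ 0) :
    dirD (G1 s) 1 x +
      dirD (G1 s) qI x * qI +
      dirD (G1 s) qJ x * qJ +
      dirD (G1 s) qK x * qK = 0 := by
  have hQ : qcs s x ≠ 0 := h
  show rightFueterSum (fun d => dirD (G1 s) d x) = 0
  simp only [dirD_G1 s x _ hQ]
  rw [rightFueterSum_mul_sub_mul, rightFueterSum_qcsDeriv_mul, rightFueterSum_star]
  calc -2 * (qcs s x)⁻¹ ^ 3 * (-2 * qcs s x) - (qcs s x)⁻¹ ^ 2 * 4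
      = 4 * ((qcs s x)⁻¹ ^ 2 * ((qcs s x)⁻¹ * qcs s x)) - 4 * (qcs s x)⁻¹ ^ 2 := by
        noncomm_ring
    _ = 0 := by rw [inv_mul_cancel₀ hQ, mul_one, sub_self]
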